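/- Let v(ρ) = 1/2 - (E²/2)·e^{2/ρ} + (L²/(2ρ²))·e^{-2/ρ} with E² = -(ρ₀-1)·e^{-2/ρ₀}/(ρ₀-2) and L² = -ρ₀²·e^{2/ρ₀}/(ρ₀-2) for fixed ρ₀ ∈ (1,2). Then v''(ρ₀) = -(ρ₀² - 6ρ₀ + 4)/(ρ₀⁴(ρ₀-2)). -/

import Mathlib

/-! With `E²` and `L²` as constants, `v` is an explicit combination of `exp (±2/ρ)` and powers of `ρ`,
so `v''` follows from the chain and quotient rules:
`v'' = -2 E² e^{2/ρ} (1 + ρ)/ρ⁴ + L² e^{-2/ρ} (3ρ² - 6ρ + 2)/ρ⁶` for `ρ ≠ 0`.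
At `ρ₀` the equilibrium values make `E² e^{2/ρ₀}` and `L² e^{-2/ρ₀}` rational in `ρ₀`,
and the claim is a rational-function identity. -/

open Real Filter Topology

noncomputable def chazyCurzonPotential (E2 L2 ρ : ℝ) : ℝ :=
  1/2 - E2/2 * exp (2/ρ) + L2/(2*ρ^2) * exp (-2/ρ)

lemma hasDerivAt_exp_const_div (c : ℝ) {x : ℝ} (hx : x ≠ 0) :
    HasDerivAt (fun ρ => exp (c/ρ)) (-c * exp (c/x) / x^2) x := by
  have h := ((hasDerivAt_inv hx).const_mul c).exp
  convert h using 1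
  · ext ρ; rw [div_eq_mul_inv]
  · rw [div_eq_mul_inv c x]; ring

lemma hasDerivAt_chazyCurzonPotential (E2 L2 : ℝ) {x : ℝ} (hx : x ≠ 0) :
    HasDerivAt (chazyCurzonPotential E2 L2)
      (E2 * exp (2/x) / x^2 + L2 * exp (-2/x) * (1 - x) / x^4) x := by
  have hsq : HasDerivAt (fun ρ : ℝ => 2*ρ^2) (2*(2*x)) x := by
    simpa using (hasDerivAt_pow 2 x).const_mul (2:ℝ)
  have hcoef : HasDerivAt (fun ρ : ℝ => L2/(2*ρ^2))
      ((0 * (2*x^2) - L2 * (2*(2*x))) / (2*x^2)^2) x :=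
    (hasDerivAt_const x L2).div hsq (by positivity)
  refine (((hasDerivAt_const x (1/2 : ℝ)).sub
    ((hasDerivAt_exp_const_div 2 hx).const_mul (E2/2))).add
    (hcoef.mul (hasDerivAt_exp_const_div (-2) hx))).congr_deriv ?_
  field_simp
  ring

lemma deriv_deriv_chazyCurzonPotential (E2 L2 : ℝ) {x : ℝ} (hx : x ≠ 0) :
    deriv (deriv (chazyCurzonPotential E2 L2)) x
      = -2 * (E2 * exp (2/x)) * (1 + x) / x^4
        + (L2 * exp (-2/x)) * (3*x^2 - 6*x + 2) / x^6 := by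
  have hderiv : deriv (chazyCurzonPotential E2 L2)
      =ᶠ[𝓝 x] fun ρ => E2 * exp (2/ρ) / ρ^2 + L2 * exp (-2/ρ) * (1 - ρ) / ρ^4 := by
    filter_upwards [eventually_ne_nhds hx] with ρ hρ
    exact (hasDerivAt_chazyCurzonPotential E2 L2 hρ).deriv
  have hsq : HasDerivAt (fun ρ : ℝ => ρ^2) (2*x) x := by simpa using hasDerivAt_pow 2 x
  have hpow4 : HasDerivAt (fun ρ : ℝ => ρ^4) (4*x^3) x := by simpa using hasDerivAt_pow 4 x
  have hE : HasDerivAt (fun ρ => E2 * exp (2/ρ) / ρ^2)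
      ((E2 * (-2 * exp (2/x) / x^2) * x^2 - E2 * exp (2/x) * (2*x)) / (x^2)^2) x :=
    ((hasDerivAt_exp_const_div 2 hx).const_mul E2).div hsq (pow_ne_zero 2 hx)
  have hL : HasDerivAt (fun ρ => L2 * exp (-2/ρ) * (1 - ρ) / ρ^4)
      (((L2 * (-(-2) * exp (-2/x) / x^2) * (1 - x) + L2 * exp (-2/x) * (-1)) * x^4
        - L2 * exp (-2/x) * (1 - x) * (4*x^3)) / (x^4)^2) x :=
    ((((hasDerivAt_exp_const_div (-2) hx).const_mul L2).mul
      ((hasDerivAt_id x).const_sub 1))).div hpow4 (pow_ne_zero 4 hx)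
  rw [hderiv.deriv_eq, (hE.fun_add hL).deriv]
  field_simp
  ring

/-- With the equilibrium values of E² and L², the second derivative of the
effective potential at ρ₀ equals -(ρ₀² - 6ρ₀ + 4)/(ρ₀⁴(ρ₀-2)). -/
theorem chazy_curzon_second_derivative (ρ₀ : ℝ) (hρ₀ : ρ₀ ∈ Set.Ioo (1:ℝ) 2) :
    deriv (deriv (fun ρ : ℝ =>
      1/2 - ((-(ρ₀ - 1) * Real.exp (-2/ρ₀) / (ρ₀ - 2))/2) * Real.exp (2/ρ)
        + ((-ρ₀^2 * Real.exp (2/ρ₀) / (ρ₀ - 2))/(2*ρ^2)) * Real.exp (-2/ρ))) ρ₀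
      = -(ρ₀^2 - 6*ρ₀ + 4) / (ρ₀^4 * (ρ₀ - 2)) := by
  obtain ⟨hρ₀_gt, hρ₀_lt⟩ := hρ₀
  have hρ₀_ne : ρ₀ ≠ 0 := by linarith
  have hρ₀_sub_ne : ρ₀ - 2 ≠ 0 := by linarith
  have hexp : exp (-2/ρ₀) * exp (2/ρ₀) = 1 := by rw [← exp_add, neg_div, neg_add_cancel, exp_zero]
  set E2 := -(ρ₀ - 1) * exp (-2/ρ₀) / (ρ₀ - 2)
  set L2 := -ρ₀^2 * exp (2/ρ₀) / (ρ₀ - 2)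
  have hE2 : E2 * exp (2/ρ₀) = -(ρ₀ - 1) / (ρ₀ - 2) := by
    simp only [E2, div_mul_eq_mul_div, mul_assoc, hexp, mul_one]
  have hL2 : L2 * exp (-2/ρ₀) = -ρ₀^2 / (ρ₀ - 2) := by
    simp only [L2, div_mul_eq_mul_div, mul_assoc, mul_comm (exp (2/ρ₀)), hexp, mul_one]
  change deriv (deriv (chazyCurzonPotential E2 L2)) ρ₀ = _
  rw [deriv_deriv_chazyCurzonPotential E2 L2 hρ₀_ne, hE2, hL2]
  field_simp
  ring
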